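/- arXiv:2505.19453 — 4 statements merged into one kernel-verified Lean document; each statement's English description precedes it below -/
import Mathlib

section
/- Let A : [0,1] → ℝ be convex with A(0) = 0, nondecreasing, and suppose every subgradient v of A at any point z ∈ [0, 1-R) satisfies v ≤ R/(1-z), where 0 < R < 1. Then for any x with 0 ≤ x ≤ 1-R, A(x) ≤ -R·ln(1-x) ≤ 1/e. -/
/-!
The right derivative of a convex function is a subgradient, so the hypothesis bounds the lower
right Dini derivative of `A` at `z` by `R / (1 - z)`, the derivative of `-R * log (1 - z)`. Both
functions vanish at `0`, and `A` is continuous on `[0, 1 - R]` (convexity and monotonicity squeeze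
it at `0`), so the comparison principle for right derivatives gives `A x ≤ -R * log (1 - x)`.
Finally `-R * log (1 - x) ≤ -R * log R ≤ 1 / e`.
-/

open Real Set Filter Topology

def IsSubgradientOn (f : ℝ → ℝ) (S : Set ℝ) (x v : ℝ) : Prop :=
  ∀ y ∈ S, f x + v * (y - x) ≤ f y

namespace ConvexOn

variable {f : ℝ → ℝ} {S : Set ℝ} {x : ℝ}

lemma isSubgradientOn_sInf_slope (hf : ConvexOn ℝ S f) (hx : x ∈ S)
    (hne : (slope f x '' {y | y ∈ S ∧ x < y}).Nonempty)
    (hbdd : BddBelow (slope f x '' {y | y ∈ S ∧ x < y})) :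
    IsSubgradientOn f S x (sInf (slope f x '' {y | y ∈ S ∧ x < y})) := by
  intro y hy
  rcases lt_trichotomy y x with hyx | rfl | hxy
  · have hle : slope f x y ≤ sInf (slope f x '' {y | y ∈ S ∧ x < y}) := by
      refine le_csInf hne ?_
      rintro _ ⟨z, ⟨hz, hxz⟩, rfl⟩
      exact hf.slope_mono hx ⟨hy, hyx.ne⟩ ⟨hz, hxz.ne'⟩ (hyx.trans hxz).le
    rw [slope_def_field, div_le_iff_of_neg (sub_neg.2 hyx)] at hle
    linarith
  · simp
  · have hle : sInf (slope f x '' {y | y ∈ S ∧ x < y}) ≤ slope f x y :=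
      csInf_le hbdd ⟨y, ⟨hy, hxy⟩, rfl⟩
    rw [slope_def_field, le_div_iff₀ (sub_pos.2 hxy)] at hle
    linarith

lemma frequently_slope_lt {y c r : ℝ} (hf : ConvexOn ℝ S f) (hx : x ∈ S) (hy : y ∈ S)
    (hxy : x < y) (hsub : ∀ v, IsSubgradientOn f S x v → v ≤ c) (hcr : c < r) :
    ∃ᶠ z in 𝓝[>] x, slope f x z < r := by
  -- Otherwise the right slopes at `x` are all `≥ r`, and so is their infimum, a subgradient.
  by_contra h
  rw [not_frequently] at h
  have hne : (slope f x '' {y | y ∈ S ∧ x < y}).Nonempty := ⟨_, y, ⟨hy, hxy⟩, rfl⟩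
  have hge : ∀ z ∈ {y | y ∈ S ∧ x < y}, r ≤ slope f x z := by
    rintro z ⟨hz, hxz⟩
    obtain ⟨w, hwr, hxw, hwz⟩ := (h.and (Ioc_mem_nhdsGT hxz)).exists
    have hw : w ∈ S := hf.1.ordConnected.out hx hz ⟨hxw.le, hwz⟩
    exact (not_lt.1 hwr).trans (hf.monotoneOn_slope_gt hx ⟨hw, hxw⟩ ⟨hz, hxz⟩ hwz)
  have hrv : r ≤ sInf (slope f x '' {y | y ∈ S ∧ x < y}) :=
    le_csInf hne (forall_mem_image.2 hge)
  have hvc := hsub _ (hf.isSubgradientOn_sInf_slope hx hne ⟨r, forall_mem_image.2 hge⟩)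
  linarith

variable {a b : ℝ}

lemma continuousWithinAt_Icc_left (hf : ConvexOn ℝ (Icc a b) f) (hmin : IsMinOn f (Icc a b) a) :
    ContinuousWithinAt f (Icc a b) a := by
  have hchord : ∀ t ∈ Icc a b, f t ≤ f a + (t - a) * slope f a b := by
    intro t ht
    rcases ht.1.eq_or_lt with rfl | hat
    · simp
    have hle := hf.monotoneOn_slope_gt (left_mem_Icc.2 (hat.le.trans ht.2)) ⟨ht, hat⟩
      ⟨right_mem_Icc.2 (hat.le.trans ht.2), hat.trans_le ht.2⟩ ht.2
    rw [slope_def_field, div_le_iff₀ (sub_pos.2 hat)] at hle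
    linarith
  have hlim : Tendsto (fun t => f a + (t - a) * slope f a b) (𝓝[Icc a b] a) (𝓝 (f a)) := by
    have : Continuous fun t => f a + (t - a) * slope f a b := by fun_prop
    simpa using (this.tendsto a).mono_left nhdsWithin_le_nhds
  exact tendsto_of_tendsto_of_tendsto_of_le_of_le' tendsto_const_nhds hlim
    (eventually_nhdsWithin_of_forall (isMinOn_iff.1 hmin))
    (eventually_nhdsWithin_of_forall hchord)

end ConvexOn

lemma hasDerivAt_neg_mul_log_one_sub (R : ℝ) {t : ℝ} (ht : t < 1) :
    HasDerivAt (fun t => -R * log (1 - t)) (R / (1 - t)) t :=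
  ((((hasDerivAt_id' t).const_sub 1).log (sub_ne_zero.2 ht.ne')).const_mul (-R)).congr_deriv
    (by ring)

lemma neg_mul_log_le_inv_exp {x : ℝ} (hx : 0 ≤ x) : -x * log x ≤ 1 / exp 1 := by
  rcases hx.eq_or_lt with rfl | hx
  · simp [(exp_pos 1).le]
  have h := add_one_le_exp (-log x - 1)
  rw [exp_sub, exp_neg, exp_log hx] at h
  have := mul_le_mul_of_nonneg_left h hx.le
  rw [mul_div_assoc', mul_inv_cancel₀ hx.ne'] at this
  linarith

theorem le_neg_mul_log_one_sub_of_subgradient_le {A : ℝ → ℝ} {R : ℝ}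
    (hconv : ConvexOn ℝ (Icc 0 1) A) (hA0 : A 0 = 0) (hmin : IsMinOn A (Icc 0 1) 0)
    (hR : 0 < R)
    (hsub : ∀ z ∈ Ico 0 (1 - R), ∀ v, IsSubgradientOn A (Icc 0 1) z v → v ≤ R / (1 - z))
    {x : ℝ} (hx : x ∈ Icc 0 (1 - R)) :
    A x ≤ -R * log (1 - x) := by
  have hsubset : Icc 0 (1 - R) ⊆ Ico 0 1 := Icc_subset_Ico_right (by linarith)
  have hcont : ContinuousOn A (Ico 0 1) :=
    (hconv.subset Ico_subset_Icc_self (convex_Ico 0 1)).continuousOn_Ico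
      ((continuousWithinAt_Icc_iff_Ici zero_lt_one).1 (hconv.continuousWithinAt_Icc_left hmin))
  have hderiv : ∀ t ∈ Icc 0 (1 - R), HasDerivAt (fun t => -R * log (1 - t)) (R / (1 - t)) t :=
    fun t ht => hasDerivAt_neg_mul_log_one_sub R (hsubset ht).2
  have hslope : ∀ t ∈ Ico 0 (1 - R), ∀ r, R / (1 - t) < r → ∃ᶠ z in 𝓝[>] t, slope A t z < r := by
    intro t ht r hr
    have ht' : t ∈ Ico 0 1 := hsubset (Ico_subset_Icc_self ht)
    exact hconv.frequently_slope_lt (Ico_subset_Icc_self ht') (right_mem_Icc.2 zero_le_one) ht'.2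
      (hsub t ht) hr
  exact image_le_of_liminf_slope_right_le_deriv_boundary (hcont.mono hsubset) (by simp [hA0])
    (fun t ht => (hderiv t ht).continuousAt.continuousWithinAt)
    (fun t ht => (hderiv t (Ico_subset_Icc_self ht)).hasDerivWithinAt) hslope hx

theorem convex_subgradient_bound_general (A : ℝ → ℝ) (R : ℝ)
    (hconv : ConvexOn ℝ (Set.Icc (0:ℝ) 1) A)
    (hA0 : A 0 = 0)
    (hmono : MonotoneOn A (Set.Icc (0:ℝ) 1))
    (hR0 : 0 < R)
    (hsub : ∀ z ∈ Set.Ico (0:ℝ) (1 - R), ∀ v : ℝ,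
      (∀ y ∈ Set.Icc (0:ℝ) 1, A z + v * (y - z) ≤ A y) → v ≤ R / (1 - z))
    (x : ℝ) (hx0 : 0 ≤ x) (hx1 : x ≤ 1 - R) :
    A x ≤ -R * Real.log (1 - x) ∧ -R * Real.log (1 - x) ≤ 1 / Real.exp 1 := by
  have hmin : IsMinOn A (Icc 0 1) 0 :=
    isMinOn_iff.2 fun t ht => hmono (left_mem_Icc.2 zero_le_one) ht ht.1
  refine ⟨le_neg_mul_log_one_sub_of_subgradient_le hconv hA0 hmin hR0 hsub ⟨hx0, hx1⟩, ?_⟩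
  calc -R * log (1 - x) ≤ -R * log R := by
        rw [neg_mul, neg_mul, neg_le_neg_iff]
        gcongr
        linarith
    _ ≤ 1 / exp 1 := neg_mul_log_le_inv_exp hR0.le

/-- If `A : [0,1] → ℝ` is convex, nondecreasing with `A 0 = 0`, and every subgradient `v`
of `A` at any point `z ∈ [0, 1-R)` satisfies `v ≤ R/(1-z)` (where `0 < R < 1`), then
for `0 ≤ x ≤ 1 - R` we have `A x ≤ -R·ln(1-x) ≤ 1/e`. -/
theorem convex_subgradient_bound (A : ℝ → ℝ) (R : ℝ)
    (hconv : ConvexOn ℝ (Set.Icc (0:ℝ) 1) A)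
    (hA0 : A 0 = 0)
    (hmono : MonotoneOn A (Set.Icc (0:ℝ) 1))
    (hR0 : 0 < R) (hR1 : R < 1)
    (hsub : ∀ z ∈ Set.Ico (0:ℝ) (1 - R), ∀ v : ℝ,
      (∀ y ∈ Set.Icc (0:ℝ) 1, A z + v * (y - z) ≤ A y) → v ≤ R / (1 - z))
    (x : ℝ) (hx0 : 0 ≤ x) (hx1 : x ≤ 1 - R) :
    A x ≤ -R * Real.log (1 - x) ∧ -R * Real.log (1 - x) ≤ 1 / Real.exp 1 :=
  convex_subgradient_bound_general A R hconv hA0 hmono hR0 hsub x hx0 hx1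
end

section
/- Nash equilibrium revenue bound (point-mass buyer, Alice-first case): suppose the buyer with value 1 goes to Alice first choosing allocations x_A from Alice and x_B from Bob, where 0 ≤ A(x_A), x_A, B(x_B), x_B ≤ 1, x_B < 1, x_A·B(x_B) ≤ x_B·A(x_A), and Ã is the lower convex envelope of A satisfying Ã(x_A) = A(x_A), Ã(z) ≥ Ã(x_A) + z - x_A for all z, Ã(0)=0, and every subgradient of Ã at z ∈ [0, 1-B(x_B)) is at most B(x_B)/(1-z). Then Alice's revenue (1-x_B)·A(x_A) is at most 1/e. -/
open Set

lemma aux_convex_log_bound (Atil : ℝ → ℝ) (b : ℝ)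
    (hconv : ConvexOn ℝ (Set.Icc (0:ℝ) 1) Atil)
    (hAtil0 : Atil 0 = 0) (hb0 : 0 ≤ b)
    (hsub : ∀ z ∈ Set.Ico (0:ℝ) (1 - b), ∀ g : ℝ,
      (∀ y ∈ Set.Icc (0:ℝ) 1, Atil z + g * (y - z) ≤ Atil y) → g ≤ b / (1 - z))
    (w : ℝ) (hw0 : 0 ≤ w) (hw : w < 1 - b) :
    Atil w ≤ -b * Real.log (1 - w) := by
  rcases eq_or_lt_of_le hw0 with rfl | hwpos
  · simp [hAtil0]
  have hw1 : w < 1 := by linarith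
  refine le_of_forall_pos_le_add (fun ε hε => ?_)
  set c : ℝ := min (w / 2) (ε / (2 * (|Atil 1| + 1))) with hc
  have habs : (0:ℝ) < |Atil 1| + 1 := by positivity
  have hcpos : 0 < c := lt_min (by linarith) (by positivity)
  have hcw : c < w := by
    have : c ≤ w / 2 := min_le_left _ _
    linarith
  have hcε : c * (|Atil 1| + 1) ≤ ε / 2 := by
    have h1 : c ≤ ε / (2 * (|Atil 1| + 1)) := min_le_right _ _
    calc c * (|Atil 1| + 1) ≤ ε / (2 * (|Atil 1| + 1)) * (|Atil 1| + 1) :=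
          mul_le_mul_of_nonneg_right h1 habs.le
      _ = ε / 2 := by field_simp
  have hAc : Atil c ≤ c * Atil 1 := by
    have h01 : (0:ℝ) ∈ Icc (0:ℝ) 1 := by constructor <;> norm_num
    have h11 : (1:ℝ) ∈ Icc (0:ℝ) 1 := by constructor <;> norm_num
    have := hconv.2 h01 h11 (by linarith : (0:ℝ) ≤ 1 - c) hcpos.le (by ring)
    simpa [hAtil0] using this
  have hmain : ∀ ⦃x⦄, x ∈ Icc c w →
      Atil x ≤ -b * Real.log (1 - x) + ε / 2 * (1 + x) := by
    refine image_le_of_liminf_slope_right_le_deriv_boundary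
      (B := fun z => -b * Real.log (1 - z) + ε / 2 * (1 + z))
      (B' := fun x => b / (1 - x) + ε / 2) ?_ ?_ ?_ ?_ ?_
    · -- continuity of Atil on [c,w]
      have h := hconv.continuousOn_interior
      rw [interior_Icc] at h
      exact h.mono (Icc_subset_Ioo hcpos hw1)
    · -- Atil c ≤ B c
      have hlog : Real.log (1 - c) ≤ 0 :=
        Real.log_nonpos (by linarith) (by linarith)
      have h1 : Atil c ≤ ε / 2 := by
        have : c * Atil 1 ≤ c * (|Atil 1| + 1) := by
          apply mul_le_mul_of_nonneg_left _ hcpos.le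
          have := le_abs_self (Atil 1); linarith
        linarith
      have h2 : (0:ℝ) ≤ -b * Real.log (1 - c) := by nlinarith
      have h3 : ε / 2 ≤ ε / 2 * (1 + c) := by nlinarith
      linarith
    · -- continuity of B
      have hlogc : ContinuousOn (fun z : ℝ => Real.log (1 - z)) (Icc c w) := by
        apply ContinuousOn.log
        · exact (continuous_const.sub continuous_id).continuousOn
        · intro x hx
          have hx1 : x < 1 := lt_of_le_of_lt hx.2 hw1
          exact sub_ne_zero.2 (ne_of_gt hx1)
      exact (continuousOn_const.mul hlogc).add (by fun_prop)
    · -- derivative of B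
      intro x hx
      have hx1 : x < 1 := lt_of_lt_of_le hx.2 hw1.le
      have hne : (1:ℝ) - x ≠ 0 := sub_ne_zero.2 (ne_of_gt hx1)
      have h1 : HasDerivAt (fun z : ℝ => 1 - z) (-1) x := by
        simpa using (hasDerivAt_id x).const_sub 1
      have h2 : HasDerivAt (fun z : ℝ => Real.log (1 - z)) (-1 / (1 - x)) x := h1.log hne
      have h3 : HasDerivAt (fun z : ℝ => -b * Real.log (1 - z)) (-b * (-1 / (1 - x))) x :=
        h2.const_mul (-b)
      have h4 : HasDerivAt (fun z : ℝ => ε / 2 * (1 + z)) (ε / 2 * 1) x :=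
        ((hasDerivAt_id x).const_add 1).const_mul (ε / 2)
      have h5 := h3.add h4
      have heq : -b * (-1 / (1 - x)) + ε / 2 * 1 = b / (1 - x) + ε / 2 := by
        field_simp
      rw [heq] at h5
      exact h5.hasDerivWithinAt
    · -- slope bound via subgradients
      intro x hx r hr
      have hx0 : 0 < x := lt_of_lt_of_le hcpos hx.1
      have hxw : x < w := hx.2
      have hx1b : x < 1 - b := lt_trans hxw hw
      have hx1 : x < 1 := by linarith
      have hxmem : x ∈ Icc (0:ℝ) 1 := ⟨hx0.le, hx1.le⟩
      set S : Set ℝ := (fun z => (Atil z - Atil x) / (z - x)) '' Ioc x 1 with hS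
      have hSne : S.Nonempty := ⟨_, ⟨1, ⟨hx1, le_refl 1⟩, rfl⟩⟩
      have hSbdd : BddBelow S := by
        refine ⟨(Atil x - Atil 0) / (x - 0), ?_⟩
        rintro s ⟨z, hz, rfl⟩
        exact hconv.slope_mono_adjacent (left_mem_Icc.2 zero_le_one)
          ⟨by linarith [hz.1], hz.2⟩ hx0 hz.1
      set D : ℝ := sInf S with hD
      have hsg : ∀ y ∈ Icc (0:ℝ) 1, Atil x + D * (y - x) ≤ Atil y := by
        intro y hy
        rcases lt_trichotomy y x with hyx | rfl | hxy
        · have hle : (Atil x - Atil y) / (x - y) ≤ D := by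
            apply le_csInf hSne
            rintro s ⟨z, hz, rfl⟩
            exact hconv.slope_mono_adjacent hy ⟨by linarith [hz.1], hz.2⟩ hyx hz.1
          have hpos : 0 < x - y := by linarith
          have := (div_le_iff₀ hpos).1 hle
          nlinarith
        · simp
        · have hle : D ≤ (Atil y - Atil x) / (y - x) :=
            csInf_le hSbdd ⟨y, ⟨hxy, hy.2⟩, rfl⟩
          have hpos : 0 < y - x := by linarith
          have := (le_div_iff₀ hpos).1 hle
          nlinarith
      have hDle : D ≤ b / (1 - x) := hsub x ⟨hx0.le, hx1b⟩ D hsg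
      have hDr : D < r := lt_of_le_of_lt hDle (by linarith)
      obtain ⟨s, ⟨z, hz, rfl⟩, hsr⟩ := exists_lt_of_csInf_lt hSne hDr
      apply Filter.Eventually.frequently
      filter_upwards [Ioc_mem_nhdsGT_of_mem ⟨le_refl x, hz.1⟩] with z' hz'
      have hsec : (Atil z' - Atil x) / (z' - x) ≤ (Atil z - Atil x) / (z - x) :=
        hconv.secant_mono hxmem ⟨by linarith [hz'.1], by linarith [hz'.2, hz.2]⟩
          ⟨by linarith [hz.1], hz.2⟩ (ne_of_gt hz'.1) (ne_of_gt hz.1) hz'.2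
      calc slope Atil x z' = (Atil z' - Atil x) / (z' - x) := by
            rw [slope_def_field]
        _ ≤ (Atil z - Atil x) / (z - x) := hsec
        _ < r := hsr
  have hfin := hmain (x := w) ⟨hcw.le, le_refl w⟩
  nlinarith [hfin]

/-- Nash equilibrium revenue bound (point-mass buyer, Alice-first case): under the
stated structural hypotheses on Alice's menu `A`, its lower convex envelope `Ã`, and
the chosen allocations `x_A`, `x_B` from Bob's menu `B`, Alice's revenue
`(1 - x_B)·A(x_A)` is at most `-B(x_B)·ln(B(x_B)) ≤ 1/e`
(with the convention `0·ln 0 = 0`, which holds since `Real.log 0 = 0`). -/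
theorem nash_alice_first_revenue_bound (A B Atil : ℝ → ℝ) (xA xB : ℝ)
    (hconv : ConvexOn ℝ (Set.Icc (0:ℝ) 1) Atil)
    (hAtil0 : Atil 0 = 0)
    (hAxA : 0 ≤ A xA) (hxA0 : 0 ≤ xA) (hxA1 : xA ≤ 1)
    (hBxB0 : 0 ≤ B xB) (hBxB1 : B xB ≤ 1)
    (hxB0 : 0 ≤ xB) (hxB1 : xB < 1)
    (hexch : xA * B xB ≤ xB * A xA)
    (htouch : Atil xA = A xA)
    (haff : ∀ z ∈ Set.Icc (0:ℝ) 1, A xA + z - xA ≤ Atil z)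
    (hsub : ∀ z ∈ Set.Ico (0:ℝ) (1 - B xB), ∀ g : ℝ,
      (∀ y ∈ Set.Icc (0:ℝ) 1, Atil z + g * (y - z) ≤ Atil y) → g ≤ B xB / (1 - z)) :
    (1 - xB) * A xA ≤ -B xB * Real.log (B xB) ∧
      -B xB * Real.log (B xB) ≤ 1 / Real.exp 1 := by
  set b : ℝ := B xB with hbdef
  set a : ℝ := A xA with hadef
  constructor
  · -- first inequality
    rcases eq_or_lt_of_le hBxB1 with hb1 | hb1
    · -- b = 1
      have h0 : a + 0 - xA ≤ Atil 0 := haff 0 ⟨le_refl 0, zero_le_one⟩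
      rw [hAtil0] at h0
      have haxA : a ≤ xA := by linarith
      have : xA * 1 ≤ xB * a := by rw [hb1] at hexch; exact hexch
      have hlog : Real.log b = 0 := by rw [hb1, Real.log_one]
      rw [hlog]
      nlinarith
    · -- b < 1
      refine le_of_forall_pos_le_add (fun ε hε => ?_)
      set δ : ℝ := min ε ((1 - b) / 2) with hδdef
      have hδpos : 0 < δ := lt_min hε (by linarith)
      have hδε : δ ≤ ε := min_le_left _ _
      have hδhalf : δ ≤ (1 - b) / 2 := min_le_right _ _
      set z : ℝ := 1 - b - δ with hzdef
      have hz0 : 0 < z := by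
        have : δ ≤ (1 - b) / 2 := hδhalf
        simp only [hzdef]; linarith
      have hz1b : z < 1 - b := by simp only [hzdef]; linarith
      have hz1 : z ≤ 1 := by linarith
      have hL1 : Atil z ≤ -b * Real.log (1 - z) :=
        aux_convex_log_bound Atil b hconv hAtil0 hBxB0 hsub z hz0.le hz1b
      have haffz : a + z - xA ≤ Atil z := haff z ⟨hz0.le, hz1⟩
      have h1z : 1 - z = b + δ := by simp only [hzdef]; ring
      rw [h1z] at hL1
      have hlogmono : b * Real.log b ≤ b * Real.log (b + δ) := by
        rcases eq_or_lt_of_le hBxB0 with hb0 | hb0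
        · rw [← hb0]; ring_nf; exact le_refl 0
        · have := Real.log_le_log hb0 (by linarith : b ≤ b + δ)
          nlinarith
      -- chain
      have hchain : (1 - xB) * a ≤ Atil z + xA - z - xA * b := by nlinarith
      have hxAb : xA * (1 - b) - (1 - b) ≤ 0 := by nlinarith
      calc (1 - xB) * a ≤ Atil z + xA - z - xA * b := hchain
        _ ≤ -b * Real.log (b + δ) + xA * (1 - b) - (1 - b) + δ := by
            simp only [hzdef]; linarith
        _ ≤ -b * Real.log b + δ := by linarith
        _ ≤ -b * Real.log b + ε := by linarith
  · -- second inequality: -b log b ≤ 1/e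
    rcases eq_or_lt_of_le hBxB0 with hb0 | hb0
    · rw [← hb0]
      simp
      positivity
    · have hepos : (0:ℝ) < Real.exp 1 := Real.exp_pos 1
      have h1 : Real.log ((Real.exp 1 * b)⁻¹) ≤ (Real.exp 1 * b)⁻¹ - 1 :=
        Real.log_le_sub_one_of_pos (by positivity)
      rw [Real.log_inv, Real.log_mul (ne_of_gt hepos) (ne_of_gt hb0), Real.log_exp] at h1
      have h2 : -Real.log b ≤ (Real.exp 1 * b)⁻¹ := by linarith
      have h3 : b * -Real.log b ≤ b * (Real.exp 1 * b)⁻¹ :=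
        mul_le_mul_of_nonneg_left h2 hb0.le
      have h4 : b * (Real.exp 1 * b)⁻¹ = 1 / Real.exp 1 := by
        field_simp
      nlinarith
end

section
/- Let Γ : [0,∞) → [0,∞) be continuous and strictly increasing on [0, 𝚟] with Γ(0)=0 and Γ(𝚟) = M > 0, with inverse Γ⁻¹ on [0,M]. Define Alice's price A(x) = ∫₀ˣ Γ⁻¹(M/(e·(1-t))) dt for x ∈ [0, 1-1/e]. Then A is convex, increasing, with derivative A'(x) = Γ⁻¹(M/(e(1-x))), and for v with Γ⁻¹(M/e) ≤ v ≤ 𝚟, the maximizer of x ↦ x·v - A(x) over [0, 1-1/e] is x = 1 - M/(e·Γ(v)). -/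
open Set MeasureTheory

/-- Properties of Alice's mechanism `A(x) = ∫₀ˣ Γ⁻¹(M/(e·(1-t))) dt` on `[0, 1 - 1/e]`:
it is convex and nondecreasing, has derivative `Γ⁻¹(M/(e·(1-x)))`, and for any value
`v` with `Γ⁻¹(M/e) ≤ v ≤ 𝚟`, the point `x = 1 - M/(e·Γ(v))` maximizes
`x ↦ x·v - A(x)` over `[0, 1 - 1/e]`. -/
theorem alice_integral_mechanism_properties
    (Γ Γinv : ℝ → ℝ) (vMye M : ℝ) (hM : 0 < M) (hvMye : 0 < vMye)
    (hcont : ContinuousOn Γ (Set.Icc 0 vMye))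
    (hmono : StrictMonoOn Γ (Set.Icc 0 vMye))
    (h0 : Γ 0 = 0) (hΓv : Γ vMye = M)
    (hinv1 : ∀ y ∈ Set.Icc (0:ℝ) M, Γinv y ∈ Set.Icc 0 vMye ∧ Γ (Γinv y) = y)
    (hinv2 : ∀ v ∈ Set.Icc (0:ℝ) vMye, Γinv (Γ v) = v)
    (A : ℝ → ℝ)
    (hA : ∀ x, A x = ∫ t in (0:ℝ)..x, Γinv (M / (Real.exp 1 * (1 - t)))) :
    ConvexOn ℝ (Set.Icc (0:ℝ) (1 - 1 / Real.exp 1)) A ∧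
    MonotoneOn A (Set.Icc (0:ℝ) (1 - 1 / Real.exp 1)) ∧
    (∀ x ∈ Set.Ioo (0:ℝ) (1 - 1 / Real.exp 1),
      HasDerivAt A (Γinv (M / (Real.exp 1 * (1 - x)))) x) ∧
    (∀ v, Γinv (M / Real.exp 1) ≤ v → v ≤ vMye →
      ∀ x ∈ Set.Icc (0:ℝ) (1 - 1 / Real.exp 1),
        x * v - A x ≤
          (1 - M / (Real.exp 1 * Γ v)) * v - A (1 - M / (Real.exp 1 * Γ v))) := by
  have hE1 : (1:ℝ) < Real.exp 1 := by
    have h := Real.add_one_le_exp (1:ℝ); linarith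
  have hE0 : (0:ℝ) < Real.exp 1 := by linarith
  set E := Real.exp 1 with hE
  set b : ℝ := 1 - 1/E with hb
  have hinvE : E * (1/E) = 1 := by field_simp
  have hb0 : 0 < b := by
    have : 1/E < 1 := by rw [div_lt_one hE0]; exact hE1
    rw [hb]; linarith
  have hbl1 : b < 1 := by
    have : 0 < 1/E := by positivity
    rw [hb]; linarith
  have hmonoOn : MonotoneOn Γ (Icc 0 vMye) := hmono.monotoneOn
  have hGinvMono : StrictMonoOn Γinv (Icc 0 M) := by
    intro y1 h1 y2 h2 h12
    by_contra hcon
    push_neg at hcon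
    have h3 := hmonoOn ((hinv1 y2 h2).1) ((hinv1 y1 h1).1) hcon
    rw [(hinv1 y1 h1).2, (hinv1 y2 h2).2] at h3
    exact absurd h3 (not_le.mpr h12)
  have hGinvMonoOn : MonotoneOn Γinv (Icc 0 M) := hGinvMono.monotoneOn
  set q : ℝ → ℝ := fun t => M / (E * (1 - t)) with hqdef
  set g : ℝ → ℝ := fun t => Γinv (q t) with hgdef
  have hA' : ∀ x, A x = ∫ t in (0:ℝ)..x, g t := hA
  have hAfun : A = fun u => ∫ t in (0:ℝ)..u, g t := funext hA'
  -- range of q on [0, b]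
  have hqmem : ∀ t ∈ Icc (0:ℝ) b, q t ∈ Icc (M/E) M := by
    intro t ht
    have h1t : 1/E ≤ 1 - t := by have := ht.2; rw [hb] at this; linarith
    have h1t' : 1 - t ≤ 1 := by have := ht.1; linarith
    have hpos : (0:ℝ) < 1 - t := lt_of_lt_of_le (by positivity) h1t
    have hEt : 0 < E * (1 - t) := by positivity
    have hEt1 : 1 ≤ E * (1 - t) := by nlinarith
    simp only [hqdef]
    constructor
    · gcongr
      nlinarith
    · calc M / (E * (1 - t)) ≤ M / 1 := by gcongr <;> nlinarith
        _ = M := div_one M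
  have hME0 : (0:ℝ) ≤ M/E := by positivity
  have hqmem' : ∀ t ∈ Icc (0:ℝ) b, q t ∈ Icc (0:ℝ) M := fun t ht =>
    ⟨le_trans hME0 (hqmem t ht).1, (hqmem t ht).2⟩
  have hqmono : MonotoneOn q (Icc 0 b) := by
    intro s hs t ht hst
    have h1t : 1/E ≤ 1 - t := by have := ht.2; rw [hb] at this; linarith
    have hpos : (0:ℝ) < 1 - t := lt_of_lt_of_le (by positivity) h1t
    have hEt : 0 < E * (1 - t) := by positivity
    simp only [hqdef]
    gcongr <;> nlinarith
  have hgmono : MonotoneOn g (Icc 0 b) := fun s hs t ht hst =>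
    hGinvMonoOn (hqmem' s hs) (hqmem' t ht) (hqmono hs ht hst)
  have hgnonneg : ∀ t ∈ Icc (0:ℝ) b, 0 ≤ g t := fun t ht =>
    (hinv1 _ (hqmem' t ht)).1.1
  -- interval integrability
  have hgint : ∀ x1 x2, x1 ∈ Icc (0:ℝ) b → x2 ∈ Icc (0:ℝ) b →
      IntervalIntegrable g volume x1 x2 := by
    intro x1 x2 h1 h2
    exact (hgmono.mono (uIcc_subset_Icc h1 h2)).intervalIntegrable
  -- continuity of Γinv on the interior
  have hGinvCont : ∀ y ∈ Ioo (0:ℝ) M, ContinuousAt Γinv y := by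
    intro y hy
    have hys : Icc (0:ℝ) M ∈ nhds y := Icc_mem_nhds hy.1 hy.2
    have hyIcc : y ∈ Icc (0:ℝ) M := ⟨hy.1.le, hy.2.le⟩
    obtain ⟨hymem, hyval⟩ := hinv1 y hyIcc
    have hinv0 : Γinv 0 = 0 := by
      have h00 := hinv2 0 ⟨le_rfl, hvMye.le⟩; rwa [h0] at h00
    have hy_pos : 0 < Γinv y := by
      rcases lt_or_ge 0 (Γinv y) with h | h
      · exact h
      · exfalso
        have h0' : Γinv y = 0 := le_antisymm h hymem.1
        rw [h0', h0] at hyval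
        exact absurd hyval.symm (ne_of_gt hy.1)
    have hy_lt : Γinv y < vMye := by
      rcases lt_or_ge (Γinv y) vMye with h | h
      · exact h
      · exfalso
        have h0' : Γinv y = vMye := le_antisymm hymem.2 h
        rw [h0', hΓv] at hyval
        exact absurd hyval.symm (ne_of_lt hy.2)
    apply hGinvMono.continuousAt_of_exists_between hys
    · intro c hc
      rcases le_or_gt c 0 with h | h
      · exact ⟨0, ⟨le_rfl, hM.le⟩, by rw [hinv0]; exact ⟨h, hy_pos⟩⟩
      · have hcIcc : c ∈ Icc (0:ℝ) vMye := ⟨h.le, le_trans hc.le hymem.2⟩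
        have hΓc : Γ c ∈ Icc (0:ℝ) M := by
          constructor
          · rw [← h0]; exact hmonoOn ⟨le_rfl, hvMye.le⟩ hcIcc h.le
          · rw [← hΓv]; exact hmonoOn hcIcc ⟨hvMye.le, le_rfl⟩ hcIcc.2
        exact ⟨Γ c, hΓc, by rw [hinv2 c hcIcc]; exact ⟨le_rfl, hc⟩⟩
    · intro c hc
      have hw1 : Γinv y < min c vMye := lt_min hc hy_lt
      have hwIcc : min c vMye ∈ Icc (0:ℝ) vMye :=
        ⟨le_trans hymem.1 hw1.le, min_le_right _ _⟩
      have hΓw : Γ (min c vMye) ∈ Icc (0:ℝ) M := by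
        constructor
        · rw [← h0]; exact hmonoOn ⟨le_rfl, hvMye.le⟩ hwIcc hwIcc.1
        · rw [← hΓv]; exact hmonoOn hwIcc ⟨hvMye.le, le_rfl⟩ hwIcc.2
      exact ⟨Γ (min c vMye), hΓw, by
        rw [hinv2 _ hwIcc]; exact ⟨hw1, min_le_left _ _⟩⟩
  -- continuity of g on the interior
  have hgcontAt : ∀ x ∈ Ioo (0:ℝ) b, ContinuousAt g x := by
    intro x hx
    have h1x : 1/E < 1 - x := by have := hx.2; rw [hb] at this; linarith
    have hpos : (0:ℝ) < 1 - x := lt_of_lt_of_le (by positivity) h1x.le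
    have hEx : 0 < E * (1 - x) := by positivity
    have hqx : q x ∈ Ioo (0:ℝ) M := by
      constructor
      · have : (0:ℝ) < M / (E * (1 - x)) := by positivity
        exact this
      · have h1lt : 1 < E * (1 - x) := by nlinarith
        calc q x < M / 1 := by
              apply div_lt_div_of_pos_left hM (by norm_num) h1lt
          _ = M := div_one M
    have hqc : ContinuousAt q x := by
      apply ContinuousAt.div continuousAt_const
      · exact (continuousAt_const.mul (continuousAt_const.sub continuousAt_id))
      · exact ne_of_gt hEx
    exact (hGinvCont (q x) hqx).comp hqc
  -- derivative
  have hderiv : ∀ x ∈ Ioo (0:ℝ) b, HasDerivAt A (g x) x := by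
    intro x hx
    have hxIcc : x ∈ Icc (0:ℝ) b := ⟨hx.1.le, hx.2.le⟩
    have hint : IntervalIntegrable g volume 0 x := hgint 0 x ⟨le_rfl, hb0.le⟩ hxIcc
    have hmeas : StronglyMeasurableAtFilter g (nhds x) :=
      ContinuousAt.stronglyMeasurableAtFilter isOpen_Ioo hgcontAt x hx
    have := intervalIntegral.integral_hasDerivAt_right hint hmeas (hgcontAt x hx)
    rw [hAfun]
    exact this
  -- continuity of A
  have hAcont : ContinuousOn A (Icc 0 b) := by
    have hsub : uIcc (0:ℝ) b = Icc (0:ℝ) b := uIcc_of_le hb0.le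
    have hint : IntegrableOn g (uIcc (0:ℝ) b) volume := by
      rw [hsub]
      have h9 := hgint 0 b ⟨le_rfl, hb0.le⟩ ⟨hb0.le, le_rfl⟩
      rwa [intervalIntegrable_iff_integrableOn_Icc_of_le hb0.le] at h9
    have := intervalIntegral.continuousOn_primitive_interval hint
    rw [hsub] at this
    rw [hAfun]
    exact this
  -- monotone
  have hAmono : MonotoneOn A (Icc 0 b) := by
    intro x hx y hy hxy
    have hdiff : A y - A x = ∫ t in x..y, g t := by
      rw [hA' x, hA' y,
        ← intervalIntegral.integral_interval_sub_left
          (hgint 0 y ⟨le_rfl, hb0.le⟩ hy) (hgint 0 x ⟨le_rfl, hb0.le⟩ hx)]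
    have h3 : 0 ≤ ∫ t in x..y, g t :=
      intervalIntegral.integral_nonneg hxy fun u hu =>
        hgnonneg u ⟨le_trans hx.1 hu.1, le_trans hu.2 hy.2⟩
    linarith
  -- convexity
  have hAconv : ConvexOn ℝ (Icc (0:ℝ) b) A := by
    apply MonotoneOn.convexOn_of_deriv (convex_Icc 0 b) hAcont
    · rw [interior_Icc]
      exact fun x hx => ((hderiv x hx).differentiableAt).differentiableWithinAt
    · rw [interior_Icc]
      intro x hx y hy hxy
      rw [(hderiv x hx).deriv, (hderiv y hy).deriv]
      exact hgmono ⟨hx.1.le, hx.2.le⟩ ⟨hy.1.le, hy.2.le⟩ hxy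
  refine ⟨hAconv, hAmono, hderiv, ?_⟩
  -- maximizer
  intro v hv1 hv2 x hx
  have hMEIcc : M/E ∈ Icc (0:ℝ) M := ⟨hME0, div_le_self hM.le hE1.le⟩
  obtain ⟨hMEmem, hMEval⟩ := hinv1 _ hMEIcc
  have hv0 : 0 ≤ v := le_trans hMEmem.1 hv1
  have hvIcc : v ∈ Icc (0:ℝ) vMye := ⟨hv0, hv2⟩
  have hΓvub : Γ v ≤ M := by
    rw [← hΓv]; exact hmonoOn hvIcc ⟨hvMye.le, le_rfl⟩ hv2
  have hΓvlb : M/E ≤ Γ v := by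
    have := hmonoOn hMEmem hvIcc hv1
    rwa [hMEval] at this
  have hΓvpos : 0 < Γ v := lt_of_lt_of_le (by positivity) hΓvlb
  have hEΓpos : 0 < E * Γ v := by positivity
  set x' : ℝ := 1 - M/(E * Γ v) with hx'def
  have hx'mem : x' ∈ Icc (0:ℝ) b := by
    constructor
    · have h5 : M ≤ E * Γ v := by
        have := mul_le_mul_of_nonneg_left hΓvlb hE0.le
        calc M = E * (M/E) := by field_simp
          _ ≤ E * Γ v := this
      have h6 : M/(E * Γ v) ≤ 1 := (div_le_one hEΓpos).mpr h5
      rw [hx'def]; linarith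
    · have h7 : 1/E ≤ M/(E * Γ v) := by
        rw [div_le_div_iff₀ hE0 hEΓpos]
        nlinarith
      rw [hx'def, hb]; linarith
  have hgx' : g x' = v := by
    have h6 : 1 - x' = M/(E * Γ v) := by rw [hx'def]; ring
    have h7 : q x' = Γ v := by
      rw [hqdef]
      simp only [h6]
      field_simp
    rw [hgdef]
    simp only [h7]
    exact hinv2 v hvIcc
  have key : A x' - A x ≤ (x' - x) * v := by
    have hdiff : A x' - A x = ∫ t in x..x', g t := by
      rw [hA' x, hA' x',
        ← intervalIntegral.integral_interval_sub_left
          (hgint 0 x' ⟨le_rfl, hb0.le⟩ hx'mem) (hgint 0 x ⟨le_rfl, hb0.le⟩ hx)]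
    rw [hdiff]
    rcases le_total x x' with hle | hle
    · have hle2 : ∫ t in x..x', g t ≤ ∫ t in x..x', v := by
        apply intervalIntegral.integral_mono_on hle (hgint x x' hx hx'mem)
          intervalIntegrable_const
        intro t ht
        have htmem : t ∈ Icc (0:ℝ) b := ⟨le_trans hx.1 ht.1, le_trans ht.2 hx'mem.2⟩
        calc g t ≤ g x' := hgmono htmem hx'mem ht.2
          _ = v := hgx'
      rw [intervalIntegral.integral_const, smul_eq_mul] at hle2
      linarith
    · rw [intervalIntegral.integral_symm]
      have hle2 : ∫ t in x'..x, v ≤ ∫ t in x'..x, g t := by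
        apply intervalIntegral.integral_mono_on hle intervalIntegrable_const
          (hgint x' x hx'mem hx)
        intro t ht
        have htmem : t ∈ Icc (0:ℝ) b := ⟨le_trans hx'mem.1 ht.1, le_trans ht.2 hx.2⟩
        calc v = g x' := hgx'.symm
          _ ≤ g t := hgmono hx'mem htmem ht.1
      rw [intervalIntegral.integral_const, smul_eq_mul] at hle2
      have h8 : (x' - x) * v = -((x - x') * v) := by ring
      linarith
  have h9 : (x' - x) * v = x' * v - x * v := by ring
  linarith
end

section
/- With Γ, M, 𝚟, Γ⁻¹ as above and z_A(v) = 0 for v < Γ⁻¹(M/e), z_A(v) = 1 - M/(e·Γ(v)) for Γ⁻¹(M/e) ≤ v ≤ 𝚟, z_A(v) = 1 - 1/e for v > 𝚟, Bob's posted-price revenue Γ(q)·(1 - z_A(q)) equals: Γ(q) if q < Γ⁻¹(M/e); M/e if Γ⁻¹(M/e) ≤ q ≤ 𝚟; and Γ(q)/e if q > 𝚟. In particular it is maximized (with value M/e) at q = 𝚟. -/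
/-! Above the threshold `Γ⁻¹(M/e)` the allocation `z_A` is chosen exactly so that
`Γ(q)·(1 - z_A(q))` is the constant `M/e`; below it the revenue is `Γ(q) < Γ(Γ⁻¹(M/e)) = M/e`
by strict monotonicity, and beyond `𝚟` it is `Γ(q)/e ≤ M/e` since `M` is the maximum of `Γ`. -/

open Real Set

lemma div_exp_one_mem_Icc {M : ℝ} (hM : 0 ≤ M) : M / exp 1 ∈ Icc 0 M :=
  ⟨by positivity, div_le_self hM (one_le_exp zero_le_one)⟩

section Piecewise

variable {Γ : ℝ → ℝ} {t v M a q : ℝ}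

lemma mul_one_sub_piecewise_alloc (ha : a ≠ 0) (hΓq : t ≤ q → q ≤ v → Γ q ≠ 0) :
    Γ q * (1 - if q < t then 0 else if q ≤ v then 1 - M / (a * Γ q) else 1 - 1 / a) =
      if q < t then Γ q else if q ≤ v then M / a else Γ q / a := by
  split_ifs with htq hqv
  · ring
  · have := hΓq (not_lt.mp htq) hqv
    field_simp
    ring
  · field_simp
    ring

lemma piecewise_revenue_le (ha : 1 ≤ a) (hlow : q < t → Γ q ≤ M / a) (hmax : Γ q ≤ M) :
    (if q < t then Γ q else if q ≤ v then M / a else Γ q / a) ≤ M / a := by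
  split_ifs with htq
  · exact hlow htq
  · exact le_rfl
  · exact div_le_div_of_nonneg_right hmax (zero_le_one.trans ha)

end Piecewise

theorem bob_posted_price_revenue_general
    (Γ Γinv zA : ℝ → ℝ) (vMye M : ℝ) (hM : 0 < M)
    (hΓmax : ∀ q, Γ q ≤ M)
    (hmono : StrictMonoOn Γ (Set.Icc 0 vMye))
    (hinv1 : ∀ y ∈ Set.Icc (0:ℝ) M, Γinv y ∈ Set.Icc 0 vMye ∧ Γ (Γinv y) = y)
    (hzA : ∀ q, zA q =
      if q < Γinv (M / Real.exp 1) then 0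
      else if q ≤ vMye then 1 - M / (Real.exp 1 * Γ q)
      else 1 - 1 / Real.exp 1) :
    (∀ q, 0 ≤ q → Γ q * (1 - zA q) =
      if q < Γinv (M / Real.exp 1) then Γ q
      else if q ≤ vMye then M / Real.exp 1
      else Γ q / Real.exp 1) ∧
    (∀ q, 0 ≤ q → Γ q * (1 - zA q) ≤ M / Real.exp 1) ∧
    (∀ q ∈ Set.Icc (Γinv (M / Real.exp 1)) vMye,
      Γ q * (1 - zA q) = M / Real.exp 1) := by
  obtain ⟨ht, hΓt⟩ := hinv1 _ (div_exp_one_mem_Icc hM.le)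
  have hrev : ∀ q, 0 ≤ q → Γ q * (1 - zA q) =
      if q < Γinv (M / exp 1) then Γ q
      else if q ≤ vMye then M / exp 1
      else Γ q / exp 1 := fun q hq => by
    rw [hzA]
    refine mul_one_sub_piecewise_alloc (exp_pos 1).ne' fun htq hqv => ?_
    have hle : M / exp 1 ≤ Γ q := hΓt ▸ hmono.monotoneOn ht ⟨hq, hqv⟩ htq
    exact ((div_pos hM (exp_pos 1)).trans_le hle).ne'
  refine ⟨hrev, fun q hq => ?_, fun q ⟨htq, hqv⟩ => ?_⟩
  · rw [hrev q hq]
    refine piecewise_revenue_le (one_le_exp zero_le_one) (fun htq => ?_) (hΓmax q)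
    exact hΓt ▸ (hmono ⟨hq, htq.le.trans ht.2⟩ ht htq).le
  · rw [hrev q (ht.1.trans htq), if_neg htq.not_gt, if_pos hqv]

/-- Bob's posted-price revenue `R(q) = Γ(q)·(1 - z_A(q))` against Alice's mechanism with
allocation rule `z_A(v) = 0` for `v < Γ⁻¹(M/e)`, `z_A(v) = 1 - M/(e·Γ(v))` for
`Γ⁻¹(M/e) ≤ v ≤ 𝚟`, and `z_A(v) = 1 - 1/e` for `v > 𝚟`, equals `Γ(q)` in the first
range, `M/e` in the second, and `Γ(q)/e` in the third; in particular `R(q) ≤ M/e` for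
all `q ≥ 0`, with equality on `[Γ⁻¹(M/e), 𝚟]`. -/
theorem bob_posted_price_revenue
    (Γ Γinv zA : ℝ → ℝ) (vMye M : ℝ) (hM : 0 < M) (hvMye : 0 < vMye)
    (hΓnonneg : ∀ q, 0 ≤ q → 0 ≤ Γ q)
    (hΓmax : ∀ q, Γ q ≤ M) (hΓv : Γ vMye = M)
    (hcont : ContinuousOn Γ (Set.Icc 0 vMye))
    (hmono : StrictMonoOn Γ (Set.Icc 0 vMye))
    (h0 : Γ 0 = 0)
    (hinv1 : ∀ y ∈ Set.Icc (0:ℝ) M, Γinv y ∈ Set.Icc 0 vMye ∧ Γ (Γinv y) = y)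
    (hinv2 : ∀ v ∈ Set.Icc (0:ℝ) vMye, Γinv (Γ v) = v)
    (hzA : ∀ q, zA q =
      if q < Γinv (M / Real.exp 1) then 0
      else if q ≤ vMye then 1 - M / (Real.exp 1 * Γ q)
      else 1 - 1 / Real.exp 1) :
    (∀ q, 0 ≤ q → Γ q * (1 - zA q) =
      if q < Γinv (M / Real.exp 1) then Γ q
      else if q ≤ vMye then M / Real.exp 1
      else Γ q / Real.exp 1) ∧
    (∀ q, 0 ≤ q → Γ q * (1 - zA q) ≤ M / Real.exp 1) ∧
    (∀ q ∈ Set.Icc (Γinv (M / Real.exp 1)) vMye,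
      Γ q * (1 - zA q) = M / Real.exp 1) :=
  bob_posted_price_revenue_general Γ Γinv zA vMye M hM hΓmax hmono hinv1 hzA
end
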